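/- arXiv:1712.08486 — 4 statements merged into one kernel-verified Lean document; each statement's English description precedes it below -/
import Mathlib

section
/- Let M be a surface minimally immersed in the unit sphere Sⁿ, with a local orthonormal frame of type (d) for the normal bundle. Then (1/2)ΔS = P + (2 − S)S − 4b²S̄, where Δ is the Laplace–Beltrami operator of the induced metric on M. -/
open Finset MeasureTheory

/-! Frame-wise description of a surface `M` minimally immersed in the unit sphere `Sⁿ`
(`n ≥ 3`).  With respect to a local orthonormal frame `e₁, e₂` tangent to `M` and
`e₃, …, e_n` normal to `M`, the second fundamental form has components
`h α i j` (`3 ≤ α ≤ n`, `i j : Fin 2`, where the tangent index `k : Fin 2` stands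
for the direction `e_{k+1}`), with first and second covariant derivatives
`h1 α i j k` and `h2 α i j k l`.  `lap` is the Laplace–Beltrami operator of the
induced metric acting on functions, and `D f k` is the covariant derivative
(directional derivative in the frame direction `e_{k+1}`) of a function `f`. -/

/-- The tangential curvature tensor `R_{ijkl}` of a surface in the unit sphere `Sⁿ`,
given through the Gauss equation by the components `h α i j` of the second
fundamental form (the normal index `α` ranging over `3 ≤ α ≤ n`):
`R_{ijkl} = (δ_{ik}δ_{jl} − δ_{il}δ_{jk}) + Σ_α (h^α_{ik}h^α_{jl} − h^α_{il}h^α_{jk})`. -/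
noncomputable def gaussR (n : ℕ) {M : Type*} (h : ℕ → Fin 2 → Fin 2 → M → ℝ)
    (i j k l : Fin 2) (x : M) : ℝ :=
  ((if i = k then (1 : ℝ) else 0) * (if j = l then (1 : ℝ) else 0)
      - (if i = l then (1 : ℝ) else 0) * (if j = k then (1 : ℝ) else 0))
    + ∑ α ∈ Icc 3 n, (h α i k x * h α j l x - h α i l x * h α j k x)

/-- The normal curvature tensor
`R_{αβkl} = Σ_m (h^α_{km} h^β_{ml} − h^α_{lm} h^β_{mk})`. -/
noncomputable def normalR {M : Type*} (h : ℕ → Fin 2 → Fin 2 → M → ℝ)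
    (α β : ℕ) (k l : Fin 2) (x : M) : ℝ :=
  ∑ m, (h α k m x * h β m l x - h α l m x * h β m k x)

/-- `S = Σ_{α,i,j} (h^α_{ij})²`, the squared norm of the second fundamental form. -/
noncomputable def Snorm (n : ℕ) {M : Type*} (h : ℕ → Fin 2 → Fin 2 → M → ℝ) (x : M) : ℝ :=
  ∑ α ∈ Icc 3 n, ∑ i, ∑ j, (h α i j x) ^ 2

/-- `P = Σ (h^α_{ijk})²`, the squared norm of the first covariant derivative of the
second fundamental form. -/
noncomputable def Pnorm (n : ℕ) {M : Type*} (h1 : ℕ → Fin 2 → Fin 2 → Fin 2 → M → ℝ) (x : M) : ℝ :=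
  ∑ α ∈ Icc 3 n, ∑ i, ∑ j, ∑ k, (h1 α i j k x) ^ 2

/-- `Q = Σ (h^α_{ijkl})²`, the squared norm of the second covariant derivative of the
second fundamental form. -/
noncomputable def Qnorm (n : ℕ) {M : Type*}
    (h2 : ℕ → Fin 2 → Fin 2 → Fin 2 → Fin 2 → M → ℝ) (x : M) : ℝ :=
  ∑ α ∈ Icc 3 n, ∑ i, ∑ j, ∑ k, ∑ l, (h2 α i j k l x) ^ 2

/-- The Gauss curvature `K` of the induced metric; by the Gauss equation `2K = 2 − S`. -/
noncomputable def gaussK (n : ℕ) {M : Type*} (h : ℕ → Fin 2 → Fin 2 → M → ℝ) (x : M) : ℝ :=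
  (2 - Snorm n h x) / 2

/-- The normal curvature `K^N = (1/2) √(Σ_{α,β,i,j} R_{αβij}²)`. -/
noncomputable def normalK (n : ℕ) {M : Type*} (h : ℕ → Fin 2 → Fin 2 → M → ℝ) (x : M) : ℝ :=
  Real.sqrt (∑ α ∈ Icc 3 n, ∑ β ∈ Icc 3 n, ∑ i, ∑ j, (normalR h α β i j x) ^ 2) / 2

/-- The normal bundle is flat: the normal curvature tensor vanishes identically. -/
def FlatNormal (n : ℕ) {M : Type*} (h : ℕ → Fin 2 → Fin 2 → M → ℝ) : Prop :=
  ∀ α ∈ Icc 3 n, ∀ β ∈ Icc 3 n, ∀ k l : Fin 2, ∀ x : M, normalR h α β k l x = 0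

/-- The normal bundle is nowhere flat: at every point of `M` some component of the
normal curvature tensor is nonzero. -/
def NowhereFlatNormal (n : ℕ) {M : Type*} (h : ℕ → Fin 2 → Fin 2 → M → ℝ) : Prop :=
  ∀ x : M, ∃ α ∈ Icc 3 n, ∃ β ∈ Icc 3 n, ∃ k l : Fin 2, normalR h α β k l x ≠ 0

/-- Frame-wise data of a surface minimally immersed in the unit sphere `Sⁿ`, recorded
through a local orthonormal tangent frame `e₁, e₂` and normal frame `e₃, …, e_n`:
the components of the second fundamental form together with its first and second
covariant derivatives, subject to the standard structural identities (symmetry,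
minimality, the Codazzi equation, the Ricci identity, the Simons-type identity for
the rough Laplacian of the second fundamental form, and the compatibility of the
derivatives of `S` with the covariant derivatives of `h`). -/
structure MinimalSurface (n : ℕ) (M : Type*)
    (lap : (M → ℝ) → M → ℝ) (D : (M → ℝ) → Fin 2 → M → ℝ) : Type _ where
  /-- components `h^α_{ij}` of the second fundamental form, for `3 ≤ α ≤ n` -/
  h : ℕ → Fin 2 → Fin 2 → M → ℝ
  /-- first covariant derivatives `h^α_{ijk}` -/
  h1 : ℕ → Fin 2 → Fin 2 → Fin 2 → M → ℝ
  /-- second covariant derivatives `h^α_{ijkl}` -/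
  h2 : ℕ → Fin 2 → Fin 2 → Fin 2 → Fin 2 → M → ℝ
  /-- symmetry of the second fundamental form -/
  h_symm : ∀ α i j, h α i j = h α j i
  /-- minimality: the mean curvature vector vanishes identically -/
  minimal : ∀ α (x : M), h α 0 0 x + h α 1 1 x = 0
  /-- covariant derivative of the (vanishing) trace -/
  minimal1 : ∀ α k (x : M), h1 α 0 0 k x + h1 α 1 1 k x = 0
  /-- second covariant derivative of the (vanishing) trace -/
  minimal2 : ∀ α k l (x : M), h2 α 0 0 k l x + h2 α 1 1 k l x = 0
  /-- the Codazzi equation `h^α_{ijk} = h^α_{ikj}` -/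
  codazzi : ∀ α i j k, h1 α i j k = h1 α i k j
  /-- symmetry of the first covariant derivative in the first two indices -/
  h1_symm : ∀ α i j k, h1 α i j k = h1 α j i k
  /-- the Ricci identity
  `h^α_{ijkl} − h^α_{ijlk} = h^α_{pj}R_{pikl} + h^α_{ip}R_{pjkl} + h^γ_{ij}R_{γαkl}` -/
  ricci : ∀ α ∈ Icc 3 n, ∀ (i j k l : Fin 2) (x : M),
    h2 α i j k l x - h2 α i j l k x =
      (∑ p, h α p j x * gaussR n h p i k l x) + (∑ p, h α i p x * gaussR n h p j k l x)
        + ∑ γ ∈ Icc 3 n, h γ i j x * normalR h γ α k l x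
  /-- the Simons-type identity for the rough Laplacian of the second fundamental form
  (using minimality, `Δh^α_{ij} = h^α_{pi}R_{pmjm} + h^α_{mp}R_{pijm} + h^γ_{mi}R_{γαjm}`) -/
  simons : ∀ α ∈ Icc 3 n, ∀ (i j : Fin 2) (x : M),
    (∑ m, h2 α i j m m x) =
      (∑ p, ∑ m, h α p i x * gaussR n h p m j m x)
        + (∑ p, ∑ m, h α m p x * gaussR n h p i j m x)
        + ∑ γ ∈ Icc 3 n, ∑ m, h γ m i x * normalR h γ α j m x
  /-- `S_k = 2 Σ h^α_{ij} h^α_{ijk}` -/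
  deriv_S : ∀ (k : Fin 2) (x : M), D (Snorm n h) k x
      = 2 * ∑ α ∈ Icc 3 n, ∑ i, ∑ j, h α i j x * h1 α i j k x
  /-- `S_{kl} = 2 Σ (h^α_{ijl} h^α_{ijk} + h^α_{ij} h^α_{ijkl})` -/
  deriv2_S : ∀ (k l : Fin 2) (x : M), D (D (Snorm n h) k) l x
      = 2 * ∑ α ∈ Icc 3 n, ∑ i, ∑ j,
          (h1 α i j l x * h1 α i j k x + h α i j x * h2 α i j k l x)
  /-- the Bochner-type identity `ΔS = 2|∇h|² + 2⟨h, Δh⟩` -/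
  laplace_S : ∀ x : M, lap (Snorm n h) x
      = 2 * Pnorm n h1 x
        + 2 * ∑ α ∈ Icc 3 n, ∑ i, ∑ j, h α i j x * (∑ m, h2 α i j m m x)

/-- A local orthonormal normal frame of type (d): the shape operators are
`L³ = [[λ³, b], [b, −λ³]]` and `L^β = diag(λ^β, −λ^β)` for `4 ≤ β ≤ n`. -/
def FrameD (n : ℕ) {M : Type*} (h : ℕ → Fin 2 → Fin 2 → M → ℝ)
    (lam : ℕ → M → ℝ) (b : M → ℝ) : Prop :=
  (∀ x : M, h 3 0 0 x = lam 3 x ∧ h 3 0 1 x = b x ∧ h 3 1 1 x = -lam 3 x) ∧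
    ∀ β ∈ Icc 4 n, ∀ x : M, h β 0 0 x = lam β x ∧ h β 0 1 x = 0 ∧ h β 1 1 x = -lam β x

/-- `S̄ = 2 Σ_{β ≥ 4} (λ^β)²`, the contribution to `S` of the normal directions
`e₄, …, e_n` in a frame of type (d). -/
noncomputable def SbarD (n : ℕ) {M : Type*} (lam : ℕ → M → ℝ) (x : M) : ℝ :=
  2 * ∑ β ∈ Icc 4 n, (lam β x) ^ 2

/-- The adapted orthonormal normal frame of Theorem 2.2: the shape operators are
`L³ = [[0, b], [b, 0]]`, `L⁴ = [[b, 0], [0, −b]]`, `L^β = 0` for `5 ≤ β ≤ n`,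
with `b² = S/4`. -/
def FrameThm22 (n : ℕ) {M : Type*} (h : ℕ → Fin 2 → Fin 2 → M → ℝ) (b : M → ℝ) : Prop :=
  (∀ x : M, h 3 0 0 x = 0 ∧ h 3 0 1 x = b x ∧ h 3 1 1 x = 0) ∧
    (∀ x : M, h 4 0 0 x = b x ∧ h 4 0 1 x = 0 ∧ h 4 1 1 x = -b x) ∧
    (∀ β ∈ Icc 5 n, ∀ (i j : Fin 2) (x : M), h β i j x = 0) ∧
    (∀ x : M, (b x) ^ 2 = Snorm n h x / 4)

/-- Curvature characterization of the totally geodesic 2-sphere (an equator of `S³`):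
`S ≡ 0`. -/
def IsGeodesicSphere (n : ℕ) {M : Type*} (h : ℕ → Fin 2 → Fin 2 → M → ℝ) : Prop :=
  ∀ x : M, Snorm n h x = 0

/-- Curvature characterization of the Clifford torus `S¹(1/√2) × S¹(1/√2) ⊂ S³`:
`S ≡ 2` (Gauss curvature `0`). -/
def IsCliffordTorus (n : ℕ) {M : Type*} (h : ℕ → Fin 2 → Fin 2 → M → ℝ) : Prop :=
  ∀ x : M, Snorm n h x = 2

/-- Curvature characterization of the Veronese surface in `S⁴` (Calabi's standard
minimal immersion of degree 2): `S ≡ 4/3` (constant Gauss curvature `1/3`). -/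
def IsVeroneseS4 (n : ℕ) {M : Type*} (h : ℕ → Fin 2 → Fin 2 → M → ℝ) : Prop :=
  ∀ x : M, Snorm n h x = 4 / 3

/-- Curvature characterization of the generalized Veronese surface in `S⁶` (Calabi's
standard minimal immersion of degree 3): `S ≡ 5/3` (constant Gauss curvature `1/6`). -/
def IsGeneralizedVeroneseS6 (n : ℕ) {M : Type*} (h : ℕ → Fin 2 → Fin 2 → M → ℝ) : Prop :=
  ∀ x : M, Snorm n h x = 5 / 3

/-- **Proposition 2.1.** Let `M` be a surface minimally immersed in the unit sphere
`Sⁿ`, with a local orthonormal normal frame of type (d) (shape operators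
`L³ = [[λ³, b], [b, −λ³]]`, `L^β = diag(λ^β, −λ^β)` for `4 ≤ β ≤ n`).  Then
`(1/2) ΔS = P + (2 − S) S − 4 b² S̄`, where `Δ` is the Laplace–Beltrami operator of
the induced metric and `S̄ = 2 Σ_{β ≥ 4} (λ^β)²`. -/
theorem half_laplacian_S_frameD
    (n : ℕ) (hn : 3 ≤ n) {M : Type*}
    (lap : (M → ℝ) → M → ℝ) (D : (M → ℝ) → Fin 2 → M → ℝ)
    (G : MinimalSurface n M lap D)
    (lam : ℕ → M → ℝ) (b : M → ℝ)
    (hframe : FrameD n G.h lam b) :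
    ∀ x : M, (1 / 2 : ℝ) * lap (Snorm n G.h) x
      = Pnorm n G.h1 x + (2 - Snorm n G.h x) * Snorm n G.h x
          - 4 * (b x) ^ 2 * SbarD n lam x := by
  intro x
  obtain ⟨hf3, hf4⟩ := hframe
  have sy : ∀ α : ℕ, G.h α 1 0 x = G.h α 0 1 x := fun α => congrFun (G.h_symm α 1 0) x
  have h300 : G.h 3 0 0 x = lam 3 x := (hf3 x).1
  have h301 : G.h 3 0 1 x = b x := (hf3 x).2.1
  have h311 : G.h 3 1 1 x = -lam 3 x := (hf3 x).2.2
  have h310 : G.h 3 1 0 x = b x := (sy 3).trans h301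
  have hv4 : ∀ β ∈ Icc 4 n, G.h β 0 0 x = lam β x ∧ G.h β 0 1 x = 0 ∧ G.h β 1 0 x = 0
      ∧ G.h β 1 1 x = -lam β x :=
    fun β hβ => ⟨(hf4 β hβ x).1, (hf4 β hβ x).2.1, (sy β).trans (hf4 β hβ x).2.1,
      (hf4 β hβ x).2.2⟩
  have hsplit : Finset.Icc 3 n = insert 3 (Finset.Icc 4 n) := by
    ext m; simp only [Finset.mem_Icc, Finset.mem_insert]; omega
  have h3notin : (3 : ℕ) ∉ Finset.Icc 4 n := by simp
  -- abbreviation for the Gauss curvature factor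
  set K : ℝ := 1 - Snorm n G.h x / 2 with hKdef
  -- the Gauss equation: the curvature tensor is K times the standard one
  have hgauss : ∀ p i k l : Fin 2, gaussR n G.h p i k l x =
      ((if p = k then (1:ℝ) else 0) * (if i = l then (1:ℝ) else 0)
        - (if p = l then (1:ℝ) else 0) * (if i = k then (1:ℝ) else 0)) * K := by
    intro p i k l
    have per : ∀ α ∈ Finset.Icc 3 n,
        G.h α p k x * G.h α i l x - G.h α p l x * G.h α i k x
        = ((if p = k then (1:ℝ) else 0) * (if i = l then (1:ℝ) else 0)
            - (if p = l then (1:ℝ) else 0) * (if i = k then (1:ℝ) else 0))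
          * (-(∑ i', ∑ j', (G.h α i' j' x) ^ 2) / 2) := by
      intro α _
      have hm : G.h α 1 1 x = -G.h α 0 0 x := by
        have := G.minimal α x; linarith
      have hs := sy α
      fin_cases p <;> fin_cases i <;> fin_cases k <;> fin_cases l <;>
        simp only [Fin.sum_univ_two, hm, hs, Fin.isValue, Fin.mk_zero, Fin.mk_one] <;> norm_num <;> ring
    have hsum : ∑ α ∈ Finset.Icc 3 n, (-(∑ i', ∑ j', (G.h α i' j' x) ^ 2) / 2)
        = -(Snorm n G.h x) / 2 := by
      simp only [Snorm, neg_div, ← Finset.sum_div, Finset.sum_neg_distrib]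
    simp only [gaussR]
    rw [Finset.sum_congr rfl per, ← Finset.mul_sum, hsum, hKdef]
    ring
  -- first contraction appearing in the Simons identity
  have hA : ∀ (α : ℕ) (i j : Fin 2),
      (∑ p, ∑ m, G.h α p i x * gaussR n G.h p m j m x) = G.h α j i x * K := by
    intro α i j
    fin_cases i <;> fin_cases j <;>
      simp only [Fin.sum_univ_two, hgauss, Fin.isValue, Fin.mk_zero, Fin.mk_one] <;> norm_num <;> ring
  -- second contraction appearing in the Simons identity
  have hB : ∀ (α : ℕ) (i j : Fin 2),
      (∑ p, ∑ m, G.h α m p x * gaussR n G.h p i j m x) = G.h α i j x * K := by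
    intro α i j
    have hm : G.h α 1 1 x = -G.h α 0 0 x := by
      have := G.minimal α x; linarith
    fin_cases i <;> fin_cases j <;>
      simp only [Fin.sum_univ_two, hgauss, hm, Fin.isValue, Fin.mk_zero, Fin.mk_one] <;> norm_num <;> ring
  -- normal curvature components
  have hNR33 : ∀ j m : Fin 2, normalR G.h 3 3 j m x = 0 := by
    intro j m
    fin_cases j <;> fin_cases m <;>
      simp only [normalR, Fin.sum_univ_two, h310, h301, Fin.isValue, Fin.mk_zero, Fin.mk_one] <;> ring
  have hNRb3 : ∀ β ∈ Icc 4 n, ∀ j m : Fin 2, normalR G.h β 3 j m x =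
      ((if j = 0 then (1:ℝ) else 0) * (if m = 1 then (1:ℝ) else 0)
        - (if j = 1 then (1:ℝ) else 0) * (if m = 0 then (1:ℝ) else 0))
      * (2 * b x * lam β x) := by
    intro β hβ j m
    obtain ⟨e1, e2, e3, e4⟩ := hv4 β hβ
    fin_cases j <;> fin_cases m <;>
      simp only [normalR, Fin.sum_univ_two, h300, h301, h310, h311, e1, e2, e3, e4,
        Fin.isValue, Fin.mk_zero, Fin.mk_one] <;> norm_num <;> ring
  have hNR3b : ∀ β ∈ Icc 4 n, ∀ j m : Fin 2, normalR G.h 3 β j m x =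
      ((if j = 0 then (1:ℝ) else 0) * (if m = 1 then (1:ℝ) else 0)
        - (if j = 1 then (1:ℝ) else 0) * (if m = 0 then (1:ℝ) else 0))
      * (-(2 * b x * lam β x)) := by
    intro β hβ j m
    obtain ⟨e1, e2, e3, e4⟩ := hv4 β hβ
    fin_cases j <;> fin_cases m <;>
      simp only [normalR, Fin.sum_univ_two, h300, h301, h310, h311, e1, e2, e3, e4,
        Fin.isValue, Fin.mk_zero, Fin.mk_one] <;> norm_num <;> ring
  have hNRbb : ∀ β ∈ Icc 4 n, ∀ γ ∈ Icc 4 n, ∀ j m : Fin 2,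
      normalR G.h γ β j m x = 0 := by
    intro β hβ γ hγ j m
    obtain ⟨e1, e2, e3, e4⟩ := hv4 β hβ
    obtain ⟨f1, f2, f3, f4⟩ := hv4 γ hγ
    fin_cases j <;> fin_cases m <;>
      simp only [normalR, Fin.sum_univ_two, e1, e2, e3, e4, f1, f2, f3, f4,
        Fin.isValue, Fin.mk_zero, Fin.mk_one] <;> ring
  -- abbreviation
  set W : ℝ := ∑ β ∈ Icc 4 n, (lam β x) ^ 2 with hWdef
  -- the normal-curvature contraction, for α = 3
  have hNTin3 : ∀ i j : Fin 2,
      (∑ γ ∈ Icc 3 n, ∑ m, G.h γ m i x * normalR G.h γ 3 j m x)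
      = ((if i = 0 then (1:ℝ) else 0) * (if j = 1 then (1:ℝ) else 0)
          + (if i = 1 then (1:ℝ) else 0) * (if j = 0 then (1:ℝ) else 0))
        * (-(2 * b x) * W) := by
    intro i j
    rw [hsplit, Finset.sum_insert h3notin]
    have t3 : (∑ m, G.h 3 m i x * normalR G.h 3 3 j m x) = 0 := by
      simp [Fin.sum_univ_two, hNR33]
    rw [t3, zero_add]
    have per : ∀ β ∈ Icc 4 n, (∑ m, G.h β m i x * normalR G.h β 3 j m x)
        = (((if i = 0 then (1:ℝ) else 0) * (if j = 1 then (1:ℝ) else 0)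
            + (if i = 1 then (1:ℝ) else 0) * (if j = 0 then (1:ℝ) else 0))
          * (-(2 * b x))) * (lam β x) ^ 2 := by
      intro β hβ
      obtain ⟨e1, e2, e3, e4⟩ := hv4 β hβ
      rw [Fin.sum_univ_two, hNRb3 β hβ j 0, hNRb3 β hβ j 1]
      fin_cases i <;> fin_cases j <;>
        simp only [e1, e2, e3, e4, Fin.isValue, Fin.mk_zero, Fin.mk_one] <;> norm_num <;> ring
    rw [Finset.sum_congr rfl per, ← Finset.mul_sum, ← hWdef]
    ring
  -- the normal-curvature contraction, for β ≥ 4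
  have hNTinb : ∀ β ∈ Icc 4 n, ∀ i j : Fin 2,
      (∑ γ ∈ Icc 3 n, ∑ m, G.h γ m i x * normalR G.h γ β j m x)
      = (2 * b x * lam β x) *
          (-(b x) * (if i = 0 then (1:ℝ) else 0) * (if j = 0 then (1:ℝ) else 0)
            + lam 3 x * (if i = 0 then (1:ℝ) else 0) * (if j = 1 then (1:ℝ) else 0)
            + lam 3 x * (if i = 1 then (1:ℝ) else 0) * (if j = 0 then (1:ℝ) else 0)
            + b x * (if i = 1 then (1:ℝ) else 0) * (if j = 1 then (1:ℝ) else 0)) := by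
    intro β hβ i j
    rw [hsplit, Finset.sum_insert h3notin]
    have tb : (∑ γ ∈ Icc 4 n, ∑ m, G.h γ m i x * normalR G.h γ β j m x) = 0 := by
      refine Finset.sum_eq_zero fun γ hγ => ?_
      rw [Fin.sum_univ_two, hNRbb β hβ γ hγ j 0, hNRbb β hβ γ hγ j 1]
      ring
    rw [tb, add_zero, Fin.sum_univ_two, hNR3b β hβ j 0, hNR3b β hβ j 1]
    fin_cases i <;> fin_cases j <;>
      simp only [h300, h301, h310, h311, Fin.isValue, Fin.mk_zero, Fin.mk_one] <;> norm_num <;> ring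
  -- per-α evaluation of ⟨h, Δh⟩ via the Simons identity
  have hTa : ∀ α ∈ Icc 3 n,
      (∑ i, ∑ j, G.h α i j x * (∑ m, G.h2 α i j m m x))
      = (∑ i, ∑ j, (G.h α i j x) ^ 2) * (2 * K)
        + ∑ i, ∑ j, G.h α i j x *
            (∑ γ ∈ Icc 3 n, ∑ m, G.h γ m i x * normalR G.h γ α j m x) := by
    intro α hα
    have e : ∀ i j : Fin 2, (∑ m, G.h2 α i j m m x)
        = G.h α j i x * K + G.h α i j x * K
          + ∑ γ ∈ Icc 3 n, ∑ m, G.h γ m i x * normalR G.h γ α j m x := by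
      intro i j
      rw [G.simons α hα i j x, hA α i j, hB α i j]
    rw [Finset.sum_congr rfl fun i _ => Finset.sum_congr rfl fun j _ => by rw [e i j]]
    have hs := sy α
    simp only [Fin.sum_univ_two, hs]
    ring
  -- total normal-curvature contribution
  have hNT : (∑ α ∈ Icc 3 n, ∑ i, ∑ j, G.h α i j x *
        (∑ γ ∈ Icc 3 n, ∑ m, G.h γ m i x * normalR G.h γ α j m x))
      = -8 * (b x) ^ 2 * W := by
    nth_rewrite 1 [hsplit]
    rw [Finset.sum_insert h3notin]
    have t3 : (∑ i, ∑ j, G.h 3 i j x *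
        (∑ γ ∈ Icc 3 n, ∑ m, G.h γ m i x * normalR G.h γ 3 j m x)) =
        -4 * (b x) ^ 2 * W := by
      simp only [hNTin3]
      simp only [Fin.sum_univ_two, h300, h301, h310, h311]
      norm_num
      ring
    have tb : ∀ β ∈ Icc 4 n, (∑ i, ∑ j, G.h β i j x *
        (∑ γ ∈ Icc 3 n, ∑ m, G.h γ m i x * normalR G.h γ β j m x)) =
        (-4 * (b x) ^ 2) * (lam β x) ^ 2 := by
      intro β hβ
      obtain ⟨e1, e2, e3, e4⟩ := hv4 β hβ
      simp only [hNTinb β hβ]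
      simp only [Fin.sum_univ_two, e1, e2, e3, e4]
      norm_num
      ring
    rw [t3, Finset.sum_congr rfl tb, ← Finset.mul_sum, ← hWdef]
    ring
  -- assemble the full trace term
  have hTsum : (∑ α ∈ Icc 3 n, ∑ i, ∑ j, G.h α i j x * (∑ m, G.h2 α i j m m x))
      = Snorm n G.h x * (2 * K) + (-8 * (b x) ^ 2 * W) := by
    rw [Finset.sum_congr rfl hTa, Finset.sum_add_distrib, hNT, ← Finset.sum_mul]
    rfl
  rw [G.laplace_S x, hTsum, hKdef]
  have hSbar : SbarD n lam x = 2 * W := by simp [SbarD, hWdef]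
  rw [hSbar]
  ring
end

section
/- Let M be a surface minimally immersed in the unit sphere Sⁿ with flat normal bundle. Then in a local orthonormal normal frame simultaneously diagonalizing all the shape operators, (1/2)ΔS = P + (2 − S)S. -/
open Finset MeasureTheory

/-- **Remark 2.1.** Let `M` be a surface minimally immersed in the unit sphere `Sⁿ`
with flat normal bundle.  Then, in a local orthonormal normal frame simultaneously
diagonalizing all the shape operators, `(1/2) ΔS = P + (2 − S) S`. -/
theorem half_laplacian_S_flat
    (n : ℕ) (hn : 3 ≤ n) {M : Type*}
    (lap : (M → ℝ) → M → ℝ) (D : (M → ℝ) → Fin 2 → M → ℝ)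
    (G : MinimalSurface n M lap D)
    (hflat : FlatNormal n G.h)
    (hdiag : ∀ α ∈ Icc 3 n, ∀ x : M, G.h α 0 1 x = 0) :
    ∀ x : M, (1 / 2 : ℝ) * lap (Snorm n G.h) x
      = Pnorm n G.h1 x + (2 - Snorm n G.h x) * Snorm n G.h x := by
  intro x
  set T : ℝ := ∑ γ ∈ Icc 3 n, (G.h γ 0 0 x) ^ 2 with hTdef
  have h01 : ∀ γ ∈ Icc 3 n, G.h γ 0 1 x = 0 := fun γ hγ => hdiag γ hγ x
  have h10 : ∀ γ ∈ Icc 3 n, G.h γ 1 0 x = 0 := fun γ hγ => by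
    rw [G.h_symm γ 1 0]; exact hdiag γ hγ x
  have h11 : ∀ γ : ℕ, G.h γ 1 1 x = - G.h γ 0 0 x := fun γ => by
    have := G.minimal γ x; linarith
  -- S = 2T
  have hS : Snorm n G.h x = 2 * T := by
    rw [hTdef, Finset.mul_sum]
    refine Finset.sum_congr rfl fun γ hγ => ?_
    simp only [Fin.sum_univ_two, h01 γ hγ, h10 γ hγ, h11 γ]
    ring
  -- values of the Gauss curvature tensor
  have gsum1 : ∑ γ ∈ Icc 3 n,
      (G.h γ 0 0 x * G.h γ 1 1 x - G.h γ 0 1 x * G.h γ 1 0 x) = -T := by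
    rw [hTdef, ← Finset.sum_neg_distrib]
    refine Finset.sum_congr rfl fun γ hγ => ?_
    rw [h01 γ hγ, h10 γ hγ, h11 γ]; ring
  have gsum2 : ∑ γ ∈ Icc 3 n,
      (G.h γ 1 1 x * G.h γ 0 0 x - G.h γ 1 0 x * G.h γ 0 1 x) = -T := by
    rw [hTdef, ← Finset.sum_neg_distrib]
    refine Finset.sum_congr rfl fun γ hγ => ?_
    rw [h01 γ hγ, h10 γ hγ, h11 γ]; ring
  have gsum3 : ∑ γ ∈ Icc 3 n,
      (G.h γ 0 1 x * G.h γ 1 0 x - G.h γ 0 0 x * G.h γ 1 1 x) = T := by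
    rw [hTdef]
    refine Finset.sum_congr rfl fun γ hγ => ?_
    rw [h01 γ hγ, h10 γ hγ, h11 γ]; ring
  have gsum4 : ∑ γ ∈ Icc 3 n,
      (G.h γ 1 0 x * G.h γ 0 1 x - G.h γ 1 1 x * G.h γ 0 0 x) = T := by
    rw [hTdef]
    refine Finset.sum_congr rfl fun γ hγ => ?_
    rw [h01 γ hγ, h10 γ hγ, h11 γ]; ring
  have g0000 : gaussR n G.h 0 0 0 0 x = 0 := by
    simp [gaussR]
  have g1111 : gaussR n G.h 1 1 1 1 x = 0 := by
    simp [gaussR]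
  have g0101 : gaussR n G.h 0 1 0 1 x = 1 - T := by
    simp only [gaussR]
    rw [gsum1]; norm_num; ring
  have g1010 : gaussR n G.h 1 0 1 0 x = 1 - T := by
    simp only [gaussR]
    rw [gsum2]; norm_num; ring
  have g1001 : gaussR n G.h 1 0 0 1 x = -(1 - T) := by
    simp only [gaussR]
    rw [gsum4]; norm_num; ring
  have g0110 : gaussR n G.h 0 1 1 0 x = -(1 - T) := by
    simp only [gaussR]
    rw [gsum3]; norm_num; ring
  -- rough Laplacian of h via Simons + flat normal bundle
  have e : ∀ α ∈ Icc 3 n, ∀ i j : Fin 2, (∑ m, G.h2 α i j m m x)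
      = (∑ p, ∑ m, G.h α p i x * gaussR n G.h p m j m x)
        + (∑ p, ∑ m, G.h α m p x * gaussR n G.h p i j m x) := by
    intro α hα i j
    rw [G.simons α hα i j x]
    have hz : (∑ γ ∈ Icc 3 n, ∑ m, G.h γ m i x * normalR G.h γ α j m x) = 0 :=
      Finset.sum_eq_zero fun γ hγ => Finset.sum_eq_zero fun m _ => by
        rw [hflat γ hγ α hα j m x]; ring
    rw [hz]; ring
  have key : ∀ α ∈ Icc 3 n,
      (∑ i, ∑ j, G.h α i j x * (∑ m, G.h2 α i j m m x))
        = 4 * (G.h α 0 0 x) ^ 2 * (1 - T) := by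
    intro α hα
    have e00 := e α hα 0 0
    have e01 := e α hα 0 1
    have e10 := e α hα 1 0
    have e11 := e α hα 1 1
    simp only [Fin.sum_univ_two] at e00 e01 e10 e11 ⊢
    rw [e00, e01, e10, e11, h01 α hα, h10 α hα, h11 α,
      g0000, g1111, g0101, g1010, g1001, g0110]
    ring
  have hmain : (∑ α ∈ Icc 3 n, ∑ i, ∑ j, G.h α i j x * (∑ m, G.h2 α i j m m x))
      = 4 * T * (1 - T) := by
    rw [Finset.sum_congr rfl key, hTdef, ← Finset.sum_mul, ← Finset.mul_sum]
  rw [G.laplace_S x, hmain, hS]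
  ring
end

section
/- Let M be a surface minimally immersed in the unit sphere Sⁿ with a local orthonormal normal frame of type (d) (shape operators L³ = [[λ³,b],[b,−λ³]], L^β = diag(λ^β,−λ^β) for β ≥ 4). Then the squared norm of the tensor Δh^α_{ij} (the rough Laplacian of the second fundamental form) satisfies Σ_{i,j,α}(Δh^α_{ij})² = (2 − S)²S + 2(5S − 8)b²S̄. -/
open Finset MeasureTheory

/-- **Formula (m).** Let `M` be a surface minimally immersed in the unit sphere `Sⁿ`
with a local orthonormal normal frame of type (d) (shape operators
`L³ = [[λ³,b],[b,−λ³]]`, `L^β = diag(λ^β,−λ^β)` for `β ≥ 4`).  Then the squared norm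
of the rough Laplacian `Δh^α_{ij} = Σ_m h^α_{ijmm}` of the second fundamental form
satisfies `Σ_{i,j,α} (Δh^α_{ij})² = (2 − S)² S + 2 (5S − 8) b² S̄`. -/
theorem norm_sq_rough_laplacian_frameD
    (n : ℕ) (hn : 3 ≤ n) {M : Type*}
    (lap : (M → ℝ) → M → ℝ) (D : (M → ℝ) → Fin 2 → M → ℝ)
    (G : MinimalSurface n M lap D)
    (lam : ℕ → M → ℝ) (b : M → ℝ)
    (hframe : FrameD n G.h lam b) :
    ∀ x : M, (∑ α ∈ Icc 3 n, ∑ i, ∑ j, (∑ m, G.h2 α i j m m x) ^ 2)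
      = (2 - Snorm n G.h x) ^ 2 * Snorm n G.h x
          + 2 * (5 * Snorm n G.h x - 8) * (b x) ^ 2 * SbarD n lam x := by
  obtain ⟨hf3, hf4⟩ := hframe
  intro x
  set l3 := lam 3 x with hl3
  set B := b x with hB
  have h30 : (3:ℕ) ∉ Finset.Icc 4 n := by simp
  have h3n : Finset.Icc 3 n = insert 3 (Finset.Icc 4 n) := by
    ext a; simp [Finset.mem_Icc, Finset.mem_insert]; omega
  have m3 : (3:ℕ) ∈ Finset.Icc 3 n := Finset.mem_Icc.mpr ⟨le_refl 3, hn⟩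
  have e300 : G.h 3 0 0 x = l3 := (hf3 x).1
  have e301 : G.h 3 0 1 x = B := (hf3 x).2.1
  have e310 : G.h 3 1 0 x = B := by rw [G.h_symm 3 1 0]; exact (hf3 x).2.1
  have e311 : G.h 3 1 1 x = -l3 := (hf3 x).2.2
  have eb : ∀ β ∈ Finset.Icc 4 n,
      G.h β 0 0 x = lam β x ∧ G.h β 0 1 x = 0 ∧ G.h β 1 0 x = 0
        ∧ G.h β 1 1 x = -lam β x := by
    intro β hβ
    obtain ⟨a1, a2, a3⟩ := hf4 β hβ x
    exact ⟨a1, a2, by rw [G.h_symm β 1 0]; exact a2, a3⟩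
  set T := ∑ β ∈ Finset.Icc 4 n, (lam β x) ^ 2 with hT
  have hS : Snorm n G.h x = 2 * l3 ^ 2 + 2 * B ^ 2 + 2 * T := by
    have hb : ∑ β ∈ Finset.Icc 4 n, (∑ i, ∑ j, (G.h β i j x) ^ 2)
        = ∑ β ∈ Finset.Icc 4 n, ((lam β x) ^ 2 * 2) := by
      refine Finset.sum_congr rfl fun β hβ => ?_
      obtain ⟨a1, a2, a3, a4⟩ := eb β hβ
      simp only [Fin.sum_univ_two, a1, a2, a3, a4]; ring
    rw [Snorm, h3n, Finset.sum_insert h30, hb, ← Finset.sum_mul, ← hT]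
    simp only [Fin.sum_univ_two, e300, e301, e310, e311]
    ring
  -- Gauss curvature tensor
  have hbsum : ∀ p i k l : Fin 2,
      ∑ β ∈ Finset.Icc 4 n,
          (G.h β p k x * G.h β i l x - G.h β p l x * G.h β i k x)
        = -T * ((if p = k then (1:ℝ) else 0) * (if i = l then (1:ℝ) else 0)
            - (if p = l then (1:ℝ) else 0) * (if i = k then (1:ℝ) else 0)) := by
    intro p i k l
    calc ∑ β ∈ Finset.Icc 4 n,
            (G.h β p k x * G.h β i l x - G.h β p l x * G.h β i k x)
        = ∑ β ∈ Finset.Icc 4 n, ((lam β x) ^ 2 *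
            (-((if p = k then (1:ℝ) else 0) * (if i = l then (1:ℝ) else 0)
              - (if p = l then (1:ℝ) else 0) * (if i = k then (1:ℝ) else 0)))) := by
          refine Finset.sum_congr rfl fun β hβ => ?_
          obtain ⟨a1, a2, a3, a4⟩ := eb β hβ
          fin_cases p <;> fin_cases i <;> fin_cases k <;> fin_cases l <;>
            simp [a1, a2, a3, a4] <;> ring
      _ = (∑ β ∈ Finset.Icc 4 n, (lam β x) ^ 2) *
            (-((if p = k then (1:ℝ) else 0) * (if i = l then (1:ℝ) else 0)
              - (if p = l then (1:ℝ) else 0) * (if i = k then (1:ℝ) else 0))) := by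
          rw [← Finset.sum_mul]
      _ = _ := by rw [← hT]; ring
  have gR : ∀ p i k l : Fin 2, gaussR n G.h p i k l x
      = (1 - Snorm n G.h x / 2) *
          ((if p = k then (1:ℝ) else 0) * (if i = l then (1:ℝ) else 0)
            - (if p = l then (1:ℝ) else 0) * (if i = k then (1:ℝ) else 0)) := by
    intro p i k l
    unfold gaussR
    rw [h3n, Finset.sum_insert h30, hbsum p i k l, hS]
    fin_cases p <;> fin_cases i <;> fin_cases k <;> fin_cases l <;>
      simp [e300, e301, e310, e311] <;> ring
  -- normal curvature values
  have nR33 : ∀ k l : Fin 2, normalR G.h 3 3 k l x = 0 := by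
    intro k l
    unfold normalR
    fin_cases k <;> fin_cases l <;>
      simp [Fin.sum_univ_two, e300, e301, e310, e311] <;> ring
  have nR3b : ∀ β ∈ Finset.Icc 4 n,
      normalR G.h 3 β 0 0 x = 0 ∧ normalR G.h 3 β 0 1 x = -(2 * B * lam β x)
        ∧ normalR G.h 3 β 1 0 x = 2 * B * lam β x ∧ normalR G.h 3 β 1 1 x = 0 := by
    intro β hβ
    obtain ⟨a1, a2, a3, a4⟩ := eb β hβ
    refine ⟨?_, ?_, ?_, ?_⟩ <;>
      · unfold normalR
        simp [Fin.sum_univ_two, e300, e301, e310, e311, a1, a2, a3, a4]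
        try ring
  have nRb3 : ∀ β ∈ Finset.Icc 4 n,
      normalR G.h β 3 0 0 x = 0 ∧ normalR G.h β 3 0 1 x = 2 * B * lam β x
        ∧ normalR G.h β 3 1 0 x = -(2 * B * lam β x) ∧ normalR G.h β 3 1 1 x = 0 := by
    intro β hβ
    obtain ⟨a1, a2, a3, a4⟩ := eb β hβ
    refine ⟨?_, ?_, ?_, ?_⟩ <;>
      · unfold normalR
        simp [Fin.sum_univ_two, e300, e301, e310, e311, a1, a2, a3, a4]
        try ring
  have nRbb : ∀ γ ∈ Finset.Icc 4 n, ∀ δ ∈ Finset.Icc 4 n, ∀ k l : Fin 2,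
      normalR G.h γ δ k l x = 0 := by
    intro γ hγ δ hδ k l
    obtain ⟨a1, a2, a3, a4⟩ := eb γ hγ
    obtain ⟨c1, c2, c3, c4⟩ := eb δ hδ
    unfold normalR
    fin_cases k <;> fin_cases l <;>
      simp [Fin.sum_univ_two, a1, a2, a3, a4, c1, c2, c3, c4] <;> ring
  -- rough Laplacian for α = 3
  have f300 : (∑ m, G.h2 3 0 0 m m x) = (2 - Snorm n G.h x) * l3 := by
    have tb : (∑ β ∈ Finset.Icc 4 n, ∑ m, G.h β m 0 x * normalR G.h β 3 0 m x) = 0 := by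
      refine Finset.sum_eq_zero fun β hβ => ?_
      obtain ⟨a1, a2, a3, a4⟩ := eb β hβ
      obtain ⟨c1, c2, c3, c4⟩ := nRb3 β hβ
      simp [Fin.sum_univ_two, a1, a2, a3, a4, c1, c2, c3, c4]
    rw [G.simons 3 m3 0 0 x, h3n, Finset.sum_insert h30, tb]
    simp only [Fin.sum_univ_two, gR, nR33, e300, e301, e310, e311]
    norm_num
    try ring
  have f311 : (∑ m, G.h2 3 1 1 m m x) = -((2 - Snorm n G.h x) * l3) := by
    have tb : (∑ β ∈ Finset.Icc 4 n, ∑ m, G.h β m 1 x * normalR G.h β 3 1 m x) = 0 := by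
      refine Finset.sum_eq_zero fun β hβ => ?_
      obtain ⟨a1, a2, a3, a4⟩ := eb β hβ
      obtain ⟨c1, c2, c3, c4⟩ := nRb3 β hβ
      simp [Fin.sum_univ_two, a1, a2, a3, a4, c1, c2, c3, c4]
    rw [G.simons 3 m3 1 1 x, h3n, Finset.sum_insert h30, tb]
    simp only [Fin.sum_univ_two, gR, nR33, e300, e301, e310, e311]
    norm_num
    try ring
  have f301 : (∑ m, G.h2 3 0 1 m m x) = (2 - Snorm n G.h x) * B - 2 * B * T := by
    have tb : (∑ β ∈ Finset.Icc 4 n, ∑ m, G.h β m 0 x * normalR G.h β 3 1 m x)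
        = -(2 * B) * T := by
      have h1 : (∑ β ∈ Finset.Icc 4 n, ∑ m, G.h β m 0 x * normalR G.h β 3 1 m x)
          = ∑ β ∈ Finset.Icc 4 n, (-(2 * B) * (lam β x) ^ 2) := by
        refine Finset.sum_congr rfl fun β hβ => ?_
        obtain ⟨a1, a2, a3, a4⟩ := eb β hβ
        obtain ⟨c1, c2, c3, c4⟩ := nRb3 β hβ
        simp only [Fin.sum_univ_two, a1, a2, a3, a4, c1, c2, c3, c4]
        ring
      rw [h1, ← Finset.mul_sum, ← hT]
    rw [G.simons 3 m3 0 1 x, h3n, Finset.sum_insert h30, tb]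
    simp only [Fin.sum_univ_two, gR, nR33, e300, e301, e310, e311]
    norm_num
    try ring
  have f310 : (∑ m, G.h2 3 1 0 m m x) = (2 - Snorm n G.h x) * B - 2 * B * T := by
    have tb : (∑ β ∈ Finset.Icc 4 n, ∑ m, G.h β m 1 x * normalR G.h β 3 0 m x)
        = -(2 * B) * T := by
      have h1 : (∑ β ∈ Finset.Icc 4 n, ∑ m, G.h β m 1 x * normalR G.h β 3 0 m x)
          = ∑ β ∈ Finset.Icc 4 n, (-(2 * B) * (lam β x) ^ 2) := by
        refine Finset.sum_congr rfl fun β hβ => ?_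
        obtain ⟨a1, a2, a3, a4⟩ := eb β hβ
        obtain ⟨c1, c2, c3, c4⟩ := nRb3 β hβ
        simp only [Fin.sum_univ_two, a1, a2, a3, a4, c1, c2, c3, c4]
        ring
      rw [h1, ← Finset.mul_sum, ← hT]
    rw [G.simons 3 m3 1 0 x, h3n, Finset.sum_insert h30, tb]
    simp only [Fin.sum_univ_two, gR, nR33, e300, e301, e310, e311]
    norm_num
    try ring
  -- rough Laplacian for β ≥ 4
  have fb : ∀ β ∈ Finset.Icc 4 n,
      (∑ m, G.h2 β 0 0 m m x) = (2 - Snorm n G.h x) * lam β x - 2 * B ^ 2 * lam β x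
      ∧ (∑ m, G.h2 β 0 1 m m x) = 2 * B * l3 * lam β x
      ∧ (∑ m, G.h2 β 1 0 m m x) = 2 * B * l3 * lam β x
      ∧ (∑ m, G.h2 β 1 1 m m x)
          = -((2 - Snorm n G.h x) * lam β x) + 2 * B ^ 2 * lam β x := by
    intro β hβ
    have mβ : β ∈ Finset.Icc 3 n := by
      have := Finset.mem_Icc.mp hβ
      exact Finset.mem_Icc.mpr ⟨by omega, this.2⟩
    obtain ⟨a1, a2, a3, a4⟩ := eb β hβ
    obtain ⟨d1, d2, d3, d4⟩ := nR3b β hβ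
    have tz : ∀ i j : Fin 2,
        (∑ γ ∈ Finset.Icc 4 n, ∑ m, G.h γ m i x * normalR G.h γ β j m x) = 0 := by
      intro i j
      refine Finset.sum_eq_zero fun γ hγ => ?_
      simp [Fin.sum_univ_two, nRbb γ hγ β hβ]
    refine ⟨?_, ?_, ?_, ?_⟩ <;>
      · rw [G.simons β mβ _ _ x, h3n, Finset.sum_insert h30, tz]
        simp only [Fin.sum_univ_two, gR, d1, d2, d3, d4,
          e300, e301, e310, e311, a1, a2, a3, a4]
        norm_num
        try ring
  -- assemble
  have hSb : SbarD n lam x = 2 * T := by unfold SbarD; rw [hT]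
  have main_b : (∑ β ∈ Finset.Icc 4 n, ∑ i, ∑ j, (∑ m, G.h2 β i j m m x) ^ 2)
      = ∑ β ∈ Finset.Icc 4 n,
          ((2 * ((2 - Snorm n G.h x) - 2 * B ^ 2) ^ 2 + 8 * B ^ 2 * l3 ^ 2)
            * (lam β x) ^ 2) := by
    refine Finset.sum_congr rfl fun β hβ => ?_
    obtain ⟨g1, g2, g3, g4⟩ := fb β hβ
    simp only [Fin.sum_univ_two] at g1 g2 g3 g4 ⊢
    rw [g1, g2, g3, g4]
    ring
  rw [h3n, Finset.sum_insert h30, main_b, ← Finset.mul_sum, ← hT, hSb]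
  simp only [Fin.sum_univ_two] at f300 f301 f310 f311 ⊢
  rw [f300, f301, f310, f311, hS]
  ring
end

section
/- Let M be a surface minimally immersed in the unit sphere Sⁿ with a local orthonormal normal frame of type (d). Then the Ricci identities yield: λ³₁₂ − λ³₂₁ = −(2 − S − S̄)b, λ³₁₁ + λ³₂₂ = (2 − S)λ³, and for each 4 ≤ β ≤ n, λ^β₁₁ + λ^β₂₂ = (2 − S − 2b²)λ^β and λ^β₁₂ − λ^β₂₁ = −2bλ³λ^β. -/
open Finset MeasureTheory

/-- **Formulas (2.10) ((35) in the paper).** Let `M` be a surface minimally immersed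
in the unit sphere `Sⁿ` with a local orthonormal normal frame of type (d).  Then the
Ricci identities yield `λ³₁₂ − λ³₂₁ = −(2 − S − S̄) b`, `λ³₁₁ + λ³₂₂ = (2 − S) λ³`,
and for each `4 ≤ β ≤ n`, `λ^β₁₁ + λ^β₂₂ = (2 − S − 2b²) λ^β` and
`λ^β₁₂ − λ^β₂₁ = −2 b λ³ λ^β`, where `λ^α_{kl} = h^α_{11kl}`. -/
theorem ricci_identities_frameD
    (n : ℕ) (hn : 3 ≤ n) {M : Type*}
    (lap : (M → ℝ) → M → ℝ) (D : (M → ℝ) → Fin 2 → M → ℝ)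
    (G : MinimalSurface n M lap D)
    (lam : ℕ → M → ℝ) (b : M → ℝ)
    (hframe : FrameD n G.h lam b) :
    ∀ x : M,
      (G.h2 3 0 0 0 1 x - G.h2 3 0 0 1 0 x
          = -(2 - Snorm n G.h x - SbarD n lam x) * b x) ∧
      (G.h2 3 0 0 0 0 x + G.h2 3 0 0 1 1 x = (2 - Snorm n G.h x) * lam 3 x) ∧
      (∀ β ∈ Icc 4 n,
        (G.h2 β 0 0 0 0 x + G.h2 β 0 0 1 1 x
            = (2 - Snorm n G.h x - 2 * (b x) ^ 2) * lam β x) ∧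
        (G.h2 β 0 0 0 1 x - G.h2 β 0 0 1 0 x = -2 * b x * lam 3 x * lam β x)) := by
  obtain ⟨hf3, hfβ⟩ := hframe
  intro x
  have h3m : (3 : ℕ) ∈ Icc 3 n := Finset.mem_Icc.mpr ⟨le_refl 3, hn⟩
  have e00 : G.h 3 0 0 x = lam 3 x := (hf3 x).1
  have e01 : G.h 3 0 1 x = b x := (hf3 x).2.1
  have e10 : G.h 3 1 0 x = b x := by rw [G.h_symm]; exact e01
  have e11 : G.h 3 1 1 x = -lam 3 x := (hf3 x).2.2
  have f00 : ∀ β ∈ Icc 4 n, G.h β 0 0 x = lam β x := fun β hβ => (hfβ β hβ x).1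
  have f01 : ∀ β ∈ Icc 4 n, G.h β 0 1 x = 0 := fun β hβ => (hfβ β hβ x).2.1
  have f10 : ∀ β ∈ Icc 4 n, G.h β 1 0 x = 0 := fun β hβ => by
    rw [G.h_symm]; exact f01 β hβ
  have f11 : ∀ β ∈ Icc 4 n, G.h β 1 1 x = -lam β x := fun β hβ => (hfβ β hβ x).2.2
  have hnot : (3 : ℕ) ∉ Icc 4 n := by simp
  have hsplit : Icc 3 n = insert 3 (Icc 4 n) := by
    ext m; simp only [Finset.mem_Icc, Finset.mem_insert]; omega
  set T : ℝ := ∑ β ∈ Icc 4 n, (lam β x) ^ 2 with hT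
  have hSbar : SbarD n lam x = 2 * T := rfl
  -- S in terms of the frame
  have hS : Snorm n G.h x = 2 * (lam 3 x) ^ 2 + 2 * (b x) ^ 2 + 2 * T := by
    rw [Snorm, hsplit, Finset.sum_insert hnot]
    have hcong : ∀ β ∈ Icc 4 n, (∑ i, ∑ j, (G.h β i j x) ^ 2) = 2 * (lam β x) ^ 2 := by
      intro β hβ
      simp only [Fin.sum_univ_two, f00 β hβ, f01 β hβ, f10 β hβ, f11 β hβ]
      ring
    rw [Finset.sum_congr rfl hcong, hT, Finset.mul_sum]
    simp only [Fin.sum_univ_two, e00, e01, e10, e11]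
    ring
  -- vanishing gaussR components
  have g0000 : gaussR n G.h 0 0 0 0 x = 0 := by simp [gaussR, mul_comm]
  have g0001 : gaussR n G.h 0 0 0 1 x = 0 := by simp [gaussR, mul_comm]
  have g1000 : gaussR n G.h 1 0 0 0 x = 0 := by simp [gaussR, mul_comm]
  have g1101 : gaussR n G.h 1 1 0 1 x = 0 := by simp [gaussR, mul_comm]
  -- the curvature components
  have g0101 : gaussR n G.h 0 1 0 1 x = 1 - Snorm n G.h x / 2 := by
    rw [gaussR, hsplit, Finset.sum_insert hnot]
    have hcong : ∀ β ∈ Icc 4 n,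
        (G.h β 0 0 x * G.h β 1 1 x - G.h β 0 1 x * G.h β 1 0 x) = -(lam β x) ^ 2 := by
      intro β hβ
      rw [f00 β hβ, f01 β hβ, f10 β hβ, f11 β hβ]; ring
    rw [Finset.sum_congr rfl hcong, Finset.sum_neg_distrib, ← hT, hS, e00, e01, e10, e11]
    norm_num; ring
  have g1001 : gaussR n G.h 1 0 0 1 x = Snorm n G.h x / 2 - 1 := by
    rw [gaussR, hsplit, Finset.sum_insert hnot]
    have hcong : ∀ β ∈ Icc 4 n,
        (G.h β 1 0 x * G.h β 0 1 x - G.h β 1 1 x * G.h β 0 0 x) = (lam β x) ^ 2 := by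
      intro β hβ
      rw [f00 β hβ, f01 β hβ, f10 β hβ, f11 β hβ]; ring
    rw [Finset.sum_congr rfl hcong, ← hT, hS, e00, e01, e10, e11]
    norm_num; ring
  -- normalR components
  have n00 : ∀ γ α : ℕ, normalR G.h γ α 0 0 x = 0 := by
    intro γ α; simp [normalR]
  have n33 : normalR G.h 3 3 0 1 x = 0 := by
    simp only [normalR, Fin.sum_univ_two, e00, e01, e10, e11]; ring
  have n3β : ∀ β ∈ Icc 4 n, normalR G.h 3 β 0 1 x = -2 * b x * lam β x := by
    intro β hβ
    simp only [normalR, Fin.sum_univ_two, e00, e01, e10, e11,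
      f00 β hβ, f01 β hβ, f10 β hβ, f11 β hβ]
    ring
  have nβ3 : ∀ β ∈ Icc 4 n, normalR G.h β 3 0 1 x = 2 * b x * lam β x := by
    intro β hβ
    simp only [normalR, Fin.sum_univ_two, e00, e01, e10, e11,
      f00 β hβ, f01 β hβ, f10 β hβ, f11 β hβ]
    ring
  have nββ : ∀ γ ∈ Icc 4 n, ∀ β ∈ Icc 4 n, normalR G.h γ β 0 1 x = 0 := by
    intro γ hγ β hβ
    simp only [normalR, Fin.sum_univ_two, f00 γ hγ, f01 γ hγ, f10 γ hγ, f11 γ hγ,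
      f00 β hβ, f01 β hβ, f10 β hβ, f11 β hβ]
    ring
  refine ⟨?_, ?_, ?_⟩
  · -- λ³₁₂ − λ³₂₁
    have r := G.ricci 3 h3m 0 0 0 1 x
    rw [hsplit, Finset.sum_insert hnot] at r
    have key : ∑ γ ∈ Icc 4 n, G.h γ 0 0 x * normalR G.h γ 3 0 1 x = 2 * b x * T := by
      rw [hT, Finset.mul_sum]
      exact Finset.sum_congr rfl fun β hβ => by rw [f00 β hβ, nβ3 β hβ]; ring
    rw [key] at r
    simp only [Fin.sum_univ_two, e00, e01, e10, e11, g0001, g1001, n33] at r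
    rw [r, hSbar]; ring
  · -- λ³₁₁ + λ³₂₂
    have s := G.simons 3 h3m 0 0 x
    rw [hsplit, Finset.sum_insert hnot] at s
    have key : ∑ γ ∈ Icc 4 n,
        ∑ m, G.h γ m 0 x * normalR G.h γ 3 0 m x = 0 := by
      refine Finset.sum_eq_zero fun γ hγ => ?_
      simp [Fin.sum_univ_two, f00 γ hγ, f10 γ hγ, n00]
    rw [key] at s
    simp only [Fin.sum_univ_two, e00, e01, e10, e11, g0000, g0001, g1000, g1101,
      g0101, g1001, n00, n33] at s
    rw [s]; ring
  · intro β hβ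
    have hβm : β ∈ Icc 3 n := by
      simp only [Finset.mem_Icc] at hβ ⊢; omega
    constructor
    · -- λ^β₁₁ + λ^β₂₂
      have s := G.simons β hβm 0 0 x
      rw [hsplit, Finset.sum_insert hnot] at s
      have key : ∑ γ ∈ Icc 4 n,
          ∑ m, G.h γ m 0 x * normalR G.h γ β 0 m x = 0 := by
        refine Finset.sum_eq_zero fun γ hγ => ?_
        simp [Fin.sum_univ_two, f00 γ hγ, f10 γ hγ, n00]
      rw [key] at s
      simp only [Fin.sum_univ_two, f00 β hβ, f01 β hβ, f10 β hβ, f11 β hβ, e00, e10,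
        g0000, g0001, g1000, g1101, g0101, g1001, n00, n3β β hβ] at s
      rw [s]; ring
    · -- λ^β₁₂ − λ^β₂₁
      have r := G.ricci β hβm 0 0 0 1 x
      rw [hsplit, Finset.sum_insert hnot] at r
      have key : ∑ γ ∈ Icc 4 n, G.h γ 0 0 x * normalR G.h γ β 0 1 x = 0 := by
        refine Finset.sum_eq_zero fun γ hγ => ?_
        rw [nββ γ hγ β hβ]; ring
      rw [key] at r
      simp only [Fin.sum_univ_two, f00 β hβ, f01 β hβ, f10 β hβ, f11 β hβ, e00,
        g0001, g1001, n3β β hβ] at r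
      rw [r]; ring
end
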